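/- For integers n_k > n_{k−1} > ⋯ > n_1 ≥ 1 and m_l > m_{l−1} > ⋯ > m_1 ≥ 1 and any x_1,…,x_k, y_1,…,y_l ∈ {1,−1}: P(ξ̃_{α_{n_i}} = x_i for 1 ≤ i ≤ k, ξ̃_{β_{m_j}} = y_j for 1 ≤ j ≤ l) = (1/2)·P(ξ̃_{α_{n_i}} = x_i for 1 ≤ i ≤ k−1, ξ̃_{β_{m_j}} = y_j for 1 ≤ j ≤ l, α_{n_k} > β_{m_l}) + (1/2)·P(ξ̃_{α_{n_i}} = x_i for 1 ≤ i ≤ k, ξ̃_{β_{m_j}} = y_j for 1 ≤ j ≤ l−1, α_{n_k} < β_{m_l}). -/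

import Mathlib

/-!
Since `α_n` and `β_m` never coincide, the left-hand side splits along `β_{m_l} < α_{n_k}` and
`α_{n_k} < β_{m_l}`; replacing `η` by `-η` exchanges `T` and `S`, hence `α` and `β`, so only the
first half needs proof. Cut it further according to the value of `α_{n_k}`. On
`{α_{n_k} = j + 1}` we have `T_j = n_k - 1` and `ξ_{j+1} = η_{j+1}`, and every other constraint
(including `β_{m_l} ≤ j`) is decided by `F_j`. Conditionally on `F_j`, `ξ_{j+1}` and `η_{j+1}`
are both fair coins, so `ξ_{j+1}` is still fair on the event where they agree: this costs exactly
the factor `1/2`. On `{α_{n_k} = ∞}` the value is `ζ_{n_k}`, a fair coin independent of `F_∞`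
and of all the other auxiliary coins.
-/

open MeasureTheory ProbabilityTheory Filter Set

noncomputable section

variable {Ω : Type*}

/-- `Q n = 1` if the `n`-th moves agree, `0` if they are opposite. -/
def Qproc (ξ η : ℕ → Ω → ℝ) (n : ℕ) (ω : Ω) : ℕ :=
  if ξ n ω = η n ω then 1 else 0

/-- `T n = ∑_{k=1}^n Q k`, the number of common movements up to step `n`. -/
def Tproc (ξ η : ℕ → Ω → ℝ) (n : ℕ) (ω : Ω) : ℕ :=
  ∑ k ∈ Finset.Icc 1 n, Qproc ξ η k ω

/-- `S n = n - T n`, the number of counter movements up to step `n`. -/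
def Sproc (ξ η : ℕ → Ω → ℝ) (n : ℕ) (ω : Ω) : ℕ :=
  n - Tproc ξ η n ω

/-- `α n = inf {k ≥ 1 : T k = n}`, with `inf ∅ = ⊤`, valued in `ℕ∞`. -/
def alphaProc (ξ η : ℕ → Ω → ℝ) (n : ℕ) (ω : Ω) : ℕ∞ :=
  ⨅ (k : ℕ) (_ : 1 ≤ k ∧ Tproc ξ η k ω = n), (k : ℕ∞)

/-- `β n = inf {k ≥ 1 : S k = n}`, with `inf ∅ = ⊤`, valued in `ℕ∞`. -/
def betaProc (ξ η : ℕ → Ω → ℝ) (n : ℕ) (ω : Ω) : ℕ∞ :=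
  ⨅ (k : ℕ) (_ : 1 ≤ k ∧ Sproc ξ η k ω = n), (k : ℕ∞)

/-- `ξ̃_{α n}`: equal to `ξ_i` on `{α n = i}` (`i < ∞`) and to `ζ n` on `{α n = ∞}`. -/
def xiAlpha (ξ η ζ : ℕ → Ω → ℝ) (n : ℕ) (ω : Ω) : ℝ :=
  if alphaProc ξ η n ω = ⊤ then ζ n ω else ξ (alphaProc ξ η n ω).toNat ω

/-- `ξ̃_{β m}`: equal to `ξ_i` on `{β m = i}` (`i < ∞`) and to `ψ m` on `{β m = ∞}`. -/
def xiBeta (ξ η ψ : ℕ → Ω → ℝ) (m : ℕ) (ω : Ω) : ℝ :=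
  if betaProc ξ η m ω = ⊤ then ψ m ω else ξ (betaProc ξ η m ω).toNat ω

/-- The common-movement walk `X n = ∑_{i=1}^n ξ̃_{α i}`. -/
def Xproc (ξ η ζ : ℕ → Ω → ℝ) (n : ℕ) (ω : Ω) : ℝ :=
  ∑ i ∈ Finset.Icc 1 n, xiAlpha ξ η ζ i ω

/-- The counter-movement walk `Y n = ∑_{i=1}^n ξ̃_{β i}`. -/
def Yproc (ξ η ψ : ℕ → Ω → ℝ) (n : ℕ) (ω : Ω) : ℝ :=
  ∑ i ∈ Finset.Icc 1 n, xiBeta ξ η ψ i ω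

def firstHit (f : ℕ → ℕ) (n : ℕ) : ℕ∞ :=
  ⨅ (k : ℕ) (_ : 1 ≤ k ∧ f k = n), (k : ℕ∞)

structure IsCountingPath (f : ℕ → ℕ) : Prop where
  zero : f 0 = 0
  step : ∀ k, f (k + 1) = f k ∨ f (k + 1) = f k + 1

lemma one_le_firstHit (f : ℕ → ℕ) (n : ℕ) : 1 ≤ firstHit f n :=
  le_iInf₂ fun _ hk => mod_cast hk.1

namespace IsCountingPath

variable {f : ℕ → ℕ} (hf : IsCountingPath f)
include hf

lemma monotone : Monotone f :=
  monotone_nat_of_le_succ fun k => by rcases hf.step k with h | h <;> omega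

lemma exists_eq_of_le {n j : ℕ} (hn : 1 ≤ n) (h : n ≤ f j) : ∃ r, 1 ≤ r ∧ r ≤ j ∧ f r = n := by
  induction j with
  | zero => have := hf.zero; omega
  | succ j ih =>
    rcases le_or_gt n (f j) with h' | h'
    · obtain ⟨r, h1, h2, h3⟩ := ih h'
      exact ⟨r, h1, by omega, h3⟩
    · exact ⟨j + 1, by omega, le_rfl, by rcases hf.step j with hs | hs <;> omega⟩

lemma firstHit_le_iff {n : ℕ} (hn : 1 ≤ n) (j : ℕ) : firstHit f n ≤ j ↔ n ≤ f j := by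
  constructor
  · intro h
    by_contra! hlt
    have : ((j + 1 : ℕ) : ℕ∞) ≤ firstHit f n := le_iInf₂ fun k hk => by
      have : j < k := by
        by_contra! hkj
        have := hf.monotone hkj
        omega
      exact_mod_cast this
    exact absurd (this.trans h) (by norm_cast; omega)
  · intro h
    obtain ⟨r, hr1, hrj, hr⟩ := hf.exists_eq_of_le hn h
    exact (iInf₂_le r ⟨hr1, hr⟩).trans (mod_cast hrj)

lemma firstHit_eq_top_iff {n : ℕ} (hn : 1 ≤ n) : firstHit f n = ⊤ ↔ ∀ j, f j < n := by
  constructor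
  · intro h j
    by_contra! hj
    have := (hf.firstHit_le_iff hn j).2 hj
    simp [h] at this
  · intro h
    by_contra hne
    obtain ⟨j, hj⟩ := ENat.ne_top_iff_exists.1 hne
    have := (hf.firstHit_le_iff hn j).1 hj.ge
    exact absurd (h j) (by omega)

lemma firstHit_eq_succ_iff {n : ℕ} (hn : 1 ≤ n) (j : ℕ) :
    firstHit f n = (j + 1 : ℕ) ↔ f j < n ∧ n ≤ f (j + 1) := by
  rw [← hf.firstHit_le_iff hn, ← not_le, ← hf.firstHit_le_iff hn]
  cases firstHit f n using ENat.recTopCoe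
  · simp only [top_le_iff, ENat.top_ne_natCast, ENat.natCast_ne_top, false_iff]
    tauto
  · simp only [Nat.cast_inj, Nat.cast_le]
    omega

lemma firstHit_mono {n n' : ℕ} (hn : 1 ≤ n) (hnn' : n ≤ n') : firstHit f n ≤ firstHit f n' := by
  cases h : firstHit f n' using ENat.recTopCoe with
  | top => exact le_top
  | coe j =>
    have := (hf.firstHit_le_iff (hn.trans hnn') j).1 h.le
    exact (hf.firstHit_le_iff hn j).2 (by omega)

end IsCountingPath

lemma measurable_of_isStoppingTime {mΩ m : MeasurableSpace Ω} {F : Filtration ℕ mΩ}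
    (hFm : ∀ j, F j ≤ m) {τ : Ω → ℕ∞} (hτ : IsStoppingTime F τ) : Measurable[m] τ := by
  refine measurable_to_countable' fun t => ?_
  cases t using ENat.recTopCoe with
  | top => exact iSup_le hFm _ hτ.measurableSet_eq_top'
  | coe j => exact hFm j _ (hτ.measurableSet_eq j)

lemma measurableSet_lt_of_measurable {m : MeasurableSpace Ω} {σ τ : Ω → ℕ∞}
    (hσ : Measurable[m] σ) (hτ : Measurable[m] τ) : MeasurableSet[m] {ω | σ ω < τ ω} :=
  hσ.prodMk hτ (Set.to_countable {p : ℕ∞ × ℕ∞ | p.1 < p.2}).measurableSet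

lemma measure_eq_tsum_inter_fiber {mΩ : MeasurableSpace Ω} {P : Measure Ω} {ι : Type*}
    [Countable ι] {f : Ω → ι} (hf : ∀ i, MeasurableSet {ω | f ω = i}) {s : Set Ω}
    (hs : MeasurableSet s) : P s = ∑' i, P (s ∩ {ω | f ω = i}) := by
  rw [← measure_iUnion
    (fun i j hij => Set.disjoint_left.2 fun ω hi hj => hij (hi.2.symm.trans hj.2))
    fun i => hs.inter (hf i)]
  congr
  ext ω
  simp

lemma measure_eq_inter_lt_add_inter_lt {mΩ : MeasurableSpace Ω} (P : Measure Ω) {σ τ : Ω → ℕ∞}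
    (hne : ∀ ω, σ ω ≠ τ ω) (hlt : MeasurableSet {ω | σ ω < τ ω}) (s : Set Ω) :
    P s = P (s ∩ {ω | σ ω < τ ω}) + P (s ∩ {ω | τ ω < σ ω}) := by
  have : s \ {ω | σ ω < τ ω} = s ∩ {ω | τ ω < σ ω} := by
    ext ω
    simp [(hne ω).symm.le_iff_lt]
  rw [← this, measure_inter_add_sdiff s hlt]

lemma setOf_forall_fin_eq_inter_last {k : ℕ} (hk : k - 1 < k) (p : Fin k → Ω → Prop) :
    {ω | ∀ i, p i ω} = {ω | ∀ i : Fin k, (i : ℕ) + 1 < k → p i ω} ∩ {ω | p ⟨k - 1, hk⟩ ω} := by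
  ext ω
  simp only [Set.mem_inter_iff, Set.mem_ofPred_eq]
  refine ⟨fun h => ⟨fun i _ => h i, h _⟩, fun ⟨h, hlast⟩ i => ?_⟩
  rcases Nat.lt_or_ge ((i : ℕ) + 1) k with hi | hi
  · exact h i hi
  · obtain rfl : i = ⟨k - 1, hk⟩ := Fin.ext (by simp only; omega)
    exact hlast

lemma iIndep_sum_elim_swap {mΩ : MeasurableSpace Ω} {μ : Measure Ω} {α β γ : Type*}
    {m₁ : α → MeasurableSpace Ω} {m₂ : β → MeasurableSpace Ω} {m₃ : γ → MeasurableSpace Ω}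
    (h : iIndep (Sum.elim m₁ (Sum.elim m₂ m₃)) μ) : iIndep (Sum.elim m₂ (Sum.elim m₁ m₃)) μ := by
  have hg : Function.Injective
      (Sum.elim (Sum.inr ∘ Sum.inl) (Sum.elim Sum.inl (Sum.inr ∘ Sum.inr)) :
        β ⊕ α ⊕ γ → α ⊕ β ⊕ γ) := by
    rintro (a | a | a) (b | b | b) h <;> simp_all
  convert h.precomp hg using 1
  funext i
  rcases i with _ | _ | _ <;> rfl

lemma exists_indep_comap_of_iIndep_sum_elim {mΩ : MeasurableSpace Ω} {μ : Measure Ω}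
    {F : Filtration ℕ mΩ} {ζ ψ : ℕ → Ω → ℝ} (hζm : ∀ n, Measurable (ζ n))
    (hψm : ∀ n, Measurable (ψ n))
    (hindep : iIndep (fun i : ℕ ⊕ ℕ ⊕ Unit =>
      Sum.elim (fun n => MeasurableSpace.comap (ζ n) inferInstance)
        (Sum.elim (fun n => MeasurableSpace.comap (ψ n) inferInstance)
          (fun _ => ⨆ n, (F n : MeasurableSpace Ω))) i) μ) (N : ℕ) :
    ∃ m ≤ mΩ, (∀ j, F j ≤ m) ∧ (∀ n ≠ N, Measurable[m] (ζ n)) ∧ (∀ n, Measurable[m] (ψ n))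
      ∧ Indep (MeasurableSpace.comap (ζ N) inferInstance) m μ := by
  set fam : ℕ ⊕ ℕ ⊕ Unit → MeasurableSpace Ω := fun i =>
    Sum.elim (fun n => MeasurableSpace.comap (ζ n) inferInstance)
      (Sum.elim (fun n => MeasurableSpace.comap (ψ n) inferInstance)
        (fun _ => ⨆ n, (F n : MeasurableSpace Ω))) i
  have h_le : ∀ i, fam i ≤ mΩ := by
    rintro (n | n | u)
    exacts [(hζm n).comap_le, (hψm n).comap_le, iSup_le F.le]
  have hsub : ∀ i, i ≠ Sum.inl N → fam i ≤ ⨆ i ∈ ({Sum.inl N} : Set (ℕ ⊕ ℕ ⊕ Unit))ᶜ, fam i :=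
    fun i hi => le_biSup fam hi
  refine ⟨⨆ i ∈ ({Sum.inl N} : Set (ℕ ⊕ ℕ ⊕ Unit))ᶜ, fam i, iSup₂_le fun i _ => h_le i,
    fun j => ?_, fun n hn => ?_, fun n => ?_, ?_⟩
  · exact (le_iSup (fun n => (F n : MeasurableSpace Ω)) j).trans
      (hsub (.inr (.inr ())) Sum.inr_ne_inl)
  · exact measurable_iff_comap_le.2 (hsub (.inl n) (by simpa using hn))
  · exact measurable_iff_comap_le.2 (hsub (.inr (.inl n)) Sum.inr_ne_inl)
  · have := indep_biSup_compl h_le hindep {Sum.inl N}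
    rwa [iSup_singleton] at this

section FairCoins

variable {m mΩ : MeasurableSpace Ω} {P : Measure Ω}

def IsFairCoin (P : Measure Ω) (m : MeasurableSpace Ω) (X : Ω → ℝ) : Prop :=
  ∀ G, MeasurableSet[m] G → ∀ c : ℝ, (c = 1 ∨ c = -1) → P (G ∩ {ω | X ω = c}) = 2⁻¹ * P G

lemma measure_inter_eq_half_of_condExp [IsFiniteMeasure P] (hm : m ≤ mΩ)
    {S G : Set Ω} (hS : MeasurableSet S) (hG : MeasurableSet[m] G)
    (h : P[S.indicator (fun _ => (1 : ℝ)) | m] =ᵐ[P] fun _ => 1 / 2) :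
    P (G ∩ S) = 2⁻¹ * P G := by
  have hint : Integrable (S.indicator fun _ => (1 : ℝ)) P := (integrable_const 1).indicator hS
  have key := setIntegral_condExp hm hint hG
  rw [setIntegral_congr_ae (hm G hG) (h.mono fun ω hω _ => hω), setIntegral_indicator hS,
    setIntegral_const, setIntegral_const, smul_eq_mul, smul_eq_mul, mul_one] at key
  rw [← ofReal_measureReal, ← key, ENNReal.ofReal_mul measureReal_nonneg, ofReal_measureReal,
    mul_comm, one_div, ENNReal.ofReal_inv_of_pos two_pos, ENNReal.ofReal_ofNat]

lemma isFairCoin_of_condExp [IsFiniteMeasure P] (hm : m ≤ mΩ)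
    {X : Ω → ℝ} (hX : Measurable X)
    (h₁ : P[{ω | X ω = 1}.indicator (fun _ => (1 : ℝ)) | m] =ᵐ[P] fun _ => 1 / 2)
    (h₂ : P[{ω | X ω = -1}.indicator (fun _ => (1 : ℝ)) | m] =ᵐ[P] fun _ => 1 / 2) :
    IsFairCoin P m X := by
  rintro G hG c (rfl | rfl)
  · exact measure_inter_eq_half_of_condExp hm (hX (measurableSet_singleton 1)) hG h₁
  · exact measure_inter_eq_half_of_condExp hm (hX (measurableSet_singleton (-1))) hG h₂

lemma IsFairCoin.neg {X : Ω → ℝ} (h : IsFairCoin P m X) : IsFairCoin P m (-X) := by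
  intro G hG c hc
  simpa only [Pi.neg_apply, neg_eq_iff_eq_neg] using
    h G hG (-c) (by rcases hc with rfl | rfl <;> simp)

lemma measure_eq_inter_add_inter_of_eq_or_eq_neg {Y : Ω → ℝ} (hYm : Measurable Y) {c : ℝ}
    (hc : c ≠ 0) (hY : ∀ ω, Y ω = c ∨ Y ω = -c) (S : Set Ω) :
    P S = P (S ∩ {ω | Y ω = c}) + P (S ∩ {ω | Y ω = -c}) := by
  have : {ω | Y ω = -c} = {ω | Y ω = c}ᶜ := by
    ext ω
    have hne : -c ≠ c := fun h => hc (by linarith)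
    rcases hY ω with h | h <;> simp [h, hne, hne.symm]
  rw [this, ← Set.sdiff_eq]
  exact (measure_inter_add_sdiff S (hYm (measurableSet_singleton c))).symm

lemma IsFairCoin.measure_inter_agree [IsFiniteMeasure P] {X Y : Ω → ℝ}
    (hX : IsFairCoin P m X) (hY : IsFairCoin P m Y) (hXm : Measurable X) (hYm : Measurable Y)
    (hXv : ∀ ω, X ω = 1 ∨ X ω = -1) (hYv : ∀ ω, Y ω = 1 ∨ Y ω = -1)
    {G : Set Ω} (hG : MeasurableSet[m] G) {c : ℝ} (hc : c = 1 ∨ c = -1) :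
    P (G ∩ {ω | X ω = Y ω} ∩ {ω | X ω = c}) = 2⁻¹ * P (G ∩ {ω | X ω = Y ω}) := by
  have hc0 : c ≠ 0 := by rcases hc with rfl | rfl <;> norm_num
  have pm : ∀ Z : Ω → ℝ, (∀ ω, Z ω = 1 ∨ Z ω = -1) → ∀ ω, Z ω = c ∨ Z ω = -c := by
    intro Z hZ ω
    rcases hc with rfl | rfl <;> rcases hZ ω with h | h <;> simp [h]
  have splitX := measure_eq_inter_add_inter_of_eq_or_eq_neg (P := P) hXm hc0 (pm X hXv)
  have splitY := measure_eq_inter_add_inter_of_eq_or_eq_neg (P := P) hYm hc0 (pm Y hYv)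
  set a := P (G ∩ {ω | X ω = c} ∩ {ω | Y ω = c})
  set b := P (G ∩ {ω | X ω = c} ∩ {ω | Y ω = -c})
  set d := P (G ∩ {ω | X ω = -c} ∩ {ω | Y ω = -c})
  have hagree : ∀ s : ℝ, G ∩ {ω | X ω = Y ω} ∩ {ω | X ω = s}
      = G ∩ {ω | X ω = s} ∩ {ω | Y ω = s} := fun s => by
    ext ω
    simp only [Set.mem_inter_iff, Set.mem_ofPred_eq]
    constructor
    · rintro ⟨⟨hG, hXY⟩, hXs⟩
      exact ⟨⟨hG, hXs⟩, hXY ▸ hXs⟩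
    · rintro ⟨⟨hG, hXs⟩, hYs⟩
      exact ⟨⟨hG, hXs.trans hYs.symm⟩, hXs⟩
  have hXc : P (G ∩ {ω | X ω = c}) = a + b := splitY _
  have hYc : P (G ∩ {ω | Y ω = -c}) = b + d := by
    rw [splitX, Set.inter_right_comm, Set.inter_right_comm G {ω | Y ω = -c}]
  -- `P (G ∩ {X = c})` and `P (G ∩ {Y = -c})` are both `P G / 2` and share the cell `b`.
  have had : a = d := by
    have := (hX G hG c hc).trans (hY G hG (-c) (by rcases hc with rfl | rfl <;> simp)).symm
    rw [hXc, hYc, add_comm b] at this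
    exact (ENNReal.add_left_inj (measure_ne_top P _)).1 this
  rw [splitX (G ∩ {ω | X ω = Y ω}), hagree, hagree]
  change a = 2⁻¹ * (a + d)
  rw [← had, ← two_mul, ← mul_assoc,
    ENNReal.inv_mul_cancel two_ne_zero ENNReal.ofNat_ne_top, one_mul]

end FairCoins

def hitValue (C : ℕ → Ω → ℕ) (ξ ζ : ℕ → Ω → ℝ) (n : ℕ) (ω : Ω) : ℝ :=
  if firstHit (C · ω) n = ⊤ then ζ n ω else ξ (firstHit (C · ω) n).toNat ω

lemma xiAlpha_eq_hitValue (ξ η ζ : ℕ → Ω → ℝ) : xiAlpha ξ η ζ = hitValue (Tproc ξ η) ξ ζ := rfl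

lemma xiBeta_eq_hitValue (ξ η ψ : ℕ → Ω → ℝ) : xiBeta ξ η ψ = hitValue (Sproc ξ η) ξ ψ := rfl

lemma hitValue_of_eq_top {C : ℕ → Ω → ℕ} {ξ ζ : ℕ → Ω → ℝ} {n : ℕ} {ω : Ω}
    (h : firstHit (C · ω) n = ⊤) : hitValue C ξ ζ n ω = ζ n ω := by
  rw [hitValue, if_pos h]

lemma hitValue_of_eq_coe {C : ℕ → Ω → ℕ} {ξ ζ : ℕ → Ω → ℝ} {n r : ℕ} {ω : Ω}
    (h : firstHit (C · ω) n = r) : hitValue C ξ ζ n ω = ξ r ω := by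
  rw [hitValue, h, if_neg (ENat.natCast_ne_top r), ENat.toNat_natCast]

section HittingTimes

variable {mΩ : MeasurableSpace Ω} (F : Filtration ℕ mΩ) {C : ℕ → Ω → ℕ}
  (hC : ∀ j, Measurable[F j] (C j)) (hpath : ∀ ω, IsCountingPath (C · ω))
include hC hpath

lemma isStoppingTime_firstHit {n : ℕ} (hn : 1 ≤ n) :
    IsStoppingTime F fun ω => firstHit (C · ω) n := by
  intro j
  have : {ω | firstHit (C · ω) n ≤ j} = C j ⁻¹' Set.Ici n := by
    ext ω
    exact (hpath ω).firstHit_le_iff hn j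
  exact this ▸ hC j measurableSet_Ici

variable {ξ : ℕ → Ω → ℝ} (hξ : ∀ r, 1 ≤ r → Measurable[F r] (ξ r)) (ζ : ℕ → Ω → ℝ)
include hξ

lemma measurableSet_hitValue_eq_inter_firstHit_le {n : ℕ} (hn : 1 ≤ n) (c : ℝ) (j : ℕ) :
    MeasurableSet[F j]
      ({ω | hitValue C ξ ζ n ω = c} ∩ {ω | firstHit (C · ω) n ≤ j}) := by
  have : {ω | hitValue C ξ ζ n ω = c} ∩ {ω | firstHit (C · ω) n ≤ j}
      = ⋃ r, ⋃ (_ : r < j), {ω | firstHit (C · ω) n = (r + 1 : ℕ)} ∩ {ω | ξ (r + 1) ω = c} := by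
    ext ω
    simp only [Set.mem_inter_iff, Set.mem_iUnion, Set.mem_ofPred_eq, exists_prop]
    constructor
    · rintro ⟨hc, hle⟩
      obtain ⟨r, hr⟩ := ENat.ne_top_iff_exists.1 (ne_top_of_le_ne_top (ENat.natCast_ne_top j) hle)
      have h1 : 1 ≤ r := by exact_mod_cast hr ▸ one_le_firstHit (C · ω) n
      have hrj : r ≤ j := by exact_mod_cast hr ▸ hle
      refine ⟨r - 1, by omega, by rw [← hr]; congr; omega, ?_⟩
      rwa [hitValue_of_eq_coe hr.symm, show r = r - 1 + 1 by omega] at hc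
    · rintro ⟨r, hrj, hr, hc⟩
      exact ⟨(hitValue_of_eq_coe hr).trans hc, hr ▸ mod_cast hrj⟩
  rw [this]
  refine .iUnion fun r => .iUnion fun hrj => .inter ?_ ?_
  · exact F.mono hrj _ ((isStoppingTime_firstHit F hC hpath hn).measurableSet_eq (r + 1))
  · exact F.mono hrj _ (hξ (r + 1) (by omega) (measurableSet_singleton c))

lemma measurableSet_hitValue_eq {m : MeasurableSpace Ω} (hFm : ∀ j, F j ≤ m) {n : ℕ}
    (hn : 1 ≤ n) (hζ : Measurable[m] (ζ n)) (c : ℝ) :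
    MeasurableSet[m] {ω | hitValue C ξ ζ n ω = c} := by
  have : {ω | hitValue C ξ ζ n ω = c} = ({ω | firstHit (C · ω) n = ⊤} ∩ {ω | ζ n ω = c})
      ∪ ⋃ j : ℕ, {ω | hitValue C ξ ζ n ω = c} ∩ {ω | firstHit (C · ω) n ≤ j} := by
    ext ω
    simp only [Set.mem_union, Set.mem_inter_iff, Set.mem_iUnion, Set.mem_ofPred_eq]
    cases h : firstHit (C · ω) n using ENat.recTopCoe with
    | top => simp [hitValue_of_eq_top h]
    | coe r => exact ⟨fun hc => .inr ⟨r, hc, le_rfl⟩, by simp [ENat.natCast_ne_top]; tauto⟩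
  rw [this]
  refine .union (.inter ?_ (hζ (measurableSet_singleton c))) (.iUnion fun j => ?_)
  · exact measurable_of_isStoppingTime hFm (isStoppingTime_firstHit F hC hpath hn)
      (measurableSet_singleton ⊤)
  · exact hFm j _ (measurableSet_hitValue_eq_inter_firstHit_le F hC hpath hξ ζ hn c j)

variable {ι : Type*} [Countable ι] {a : ι → ℕ} (ha : ∀ i, 1 ≤ a i) (x : ι → ℝ)
include ha

lemma measurableSet_setOf_forall_hitValue_eq {m : MeasurableSpace Ω} (hFm : ∀ j, F j ≤ m)
    (hζ : ∀ i, Measurable[m] (ζ (a i))) :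
    MeasurableSet[m] {ω | ∀ i, hitValue C ξ ζ (a i) ω = x i} := by
  rw [Set.ofPred_forall]
  exact .iInter fun i => measurableSet_hitValue_eq F hC hpath hξ ζ hFm (ha i) (hζ i) (x i)

lemma measurableSet_setOf_forall_hitValue_eq_inter {j : ℕ} {D : Set Ω}
    (hD : MeasurableSet[F j] D) (hDa : ∀ ω ∈ D, ∀ i, firstHit (C · ω) (a i) ≤ j) :
    MeasurableSet[F j] ({ω | ∀ i, hitValue C ξ ζ (a i) ω = x i} ∩ D) := by
  have : {ω | ∀ i, hitValue C ξ ζ (a i) ω = x i} ∩ D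
      = (⋂ i, {ω | hitValue C ξ ζ (a i) ω = x i} ∩ {ω | firstHit (C · ω) (a i) ≤ j}) ∩ D := by
    ext ω
    simp only [Set.mem_inter_iff, Set.mem_iInter, Set.mem_ofPred_eq]
    exact ⟨fun ⟨hx, hω⟩ => ⟨fun i => ⟨hx i, hDa ω hω i⟩, hω⟩,
      fun ⟨hx, hω⟩ => ⟨fun i => (hx i).1, hω⟩⟩
  rw [this]
  exact .inter (.iInter fun i =>
    measurableSet_hitValue_eq_inter_firstHit_le F hC hpath hξ ζ (ha i) (x i) j) hD

end HittingTimes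

section Paths

variable (ξ η : ℕ → Ω → ℝ)

lemma alphaProc_eq_firstHit (n : ℕ) (ω : Ω) : alphaProc ξ η n ω = firstHit (Tproc ξ η · ω) n :=
  rfl

lemma betaProc_eq_firstHit (n : ℕ) (ω : Ω) : betaProc ξ η n ω = firstHit (Sproc ξ η · ω) n :=
  rfl

lemma Tproc_succ (k : ℕ) (ω : Ω) :
    Tproc ξ η (k + 1) ω = Tproc ξ η k ω + Qproc ξ η (k + 1) ω :=
  Finset.sum_Icc_succ_top (by omega) _

lemma isCountingPath_Tproc (ω : Ω) : IsCountingPath (Tproc ξ η · ω) where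
  zero := by simp [Tproc]
  step k := by rw [Tproc_succ, Qproc]; split <;> simp

lemma Tproc_le (n : ℕ) (ω : Ω) : Tproc ξ η n ω ≤ n := by
  induction n with
  | zero => simp [(isCountingPath_Tproc ξ η ω).zero]
  | succ n ih => rcases (isCountingPath_Tproc ξ η ω).step n with h | h <;> omega

lemma Sproc_add_Tproc (n : ℕ) (ω : Ω) : Sproc ξ η n ω + Tproc ξ η n ω = n :=
  Nat.sub_add_cancel (Tproc_le ξ η n ω)

lemma isCountingPath_Sproc (ω : Ω) : IsCountingPath (Sproc ξ η · ω) where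
  zero := by simp [Sproc, (isCountingPath_Tproc ξ η ω).zero]
  step k := by
    have := Sproc_add_Tproc ξ η k ω
    have := Sproc_add_Tproc ξ η (k + 1) ω
    rcases (isCountingPath_Tproc ξ η ω).step k with h | h <;> omega

lemma alphaProc_eq_succ_iff {n : ℕ} (hn : 1 ≤ n) (j : ℕ) (ω : Ω) :
    alphaProc ξ η n ω = (j + 1 : ℕ) ↔ Tproc ξ η j ω + 1 = n ∧ ξ (j + 1) ω = η (j + 1) ω := by
  rw [alphaProc_eq_firstHit, (isCountingPath_Tproc ξ η ω).firstHit_eq_succ_iff hn, Tproc_succ,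
    Qproc]
  split
  · simp_all
    omega
  · simp_all

lemma alphaProc_ne_betaProc {n m : ℕ} (hn : 1 ≤ n) (hm : 1 ≤ m) (ω : Ω) :
    alphaProc ξ η n ω ≠ betaProc ξ η m ω := by
  have hT := isCountingPath_Tproc ξ η ω
  have hS := isCountingPath_Sproc ξ η ω
  rw [alphaProc_eq_firstHit, betaProc_eq_firstHit]
  intro h
  cases hα : firstHit (Tproc ξ η · ω) n using ENat.recTopCoe with
  | top =>
    have hTn := (hT.firstHit_eq_top_iff hn).1 hα (n + m)
    have hSm := (hS.firstHit_eq_top_iff hm).1 (hα ▸ h).symm (n + m)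
    have := Sproc_add_Tproc ξ η (n + m) ω
    omega
  | coe j =>
    obtain _ | j := j
    · exact absurd (one_le_firstHit (Tproc ξ η · ω) n) (by rw [hα]; simp)
    have hTj := (hT.firstHit_eq_succ_iff hn j).1 hα
    have hSj := (hS.firstHit_eq_succ_iff hm j).1 (hα ▸ h).symm
    have := Sproc_add_Tproc ξ η j ω
    have := Sproc_add_Tproc ξ η (j + 1) ω
    rcases hT.step j with _ | _ <;> rcases hS.step j with _ | _ <;> omega

end Paths

section Swap

variable {ξ η : ℕ → Ω → ℝ} (hξv : ∀ n ω, ξ n ω = 1 ∨ ξ n ω = -1)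
  (hηv : ∀ n ω, η n ω = 1 ∨ η n ω = -1)
include hξv hηv

lemma Tproc_neg_add_Tproc (n : ℕ) (ω : Ω) : Tproc ξ (-η) n ω + Tproc ξ η n ω = n := by
  have hQ : ∀ k, Qproc ξ (-η) k ω + Qproc ξ η k ω = 1 := fun k => by
    rcases hξv k ω with h1 | h1 <;> rcases hηv k ω with h2 | h2 <;> norm_num [Qproc, h1, h2]
  simp [Tproc, ← Finset.sum_add_distrib, hQ]

lemma Tproc_neg : Tproc ξ (-η) = Sproc ξ η := by
  ext n ω
  have := Tproc_neg_add_Tproc hξv hηv n ω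
  rw [Sproc]
  omega

lemma Sproc_neg : Sproc ξ (-η) = Tproc ξ η := by
  ext n ω
  have := Tproc_neg_add_Tproc hξv hηv n ω
  rw [Sproc]
  omega

lemma alphaProc_neg : alphaProc ξ (-η) = betaProc ξ η := by
  funext n ω
  rw [alphaProc, betaProc, Tproc_neg hξv hηv]

lemma betaProc_neg : betaProc ξ (-η) = alphaProc ξ η := by
  funext n ω
  rw [alphaProc, betaProc, Sproc_neg hξv hηv]

lemma xiAlpha_neg (ψ : ℕ → Ω → ℝ) : xiAlpha ξ (-η) ψ = xiBeta ξ η ψ := by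
  funext n ω
  rw [xiAlpha, xiBeta, alphaProc_neg hξv hηv]

lemma xiBeta_neg (ζ : ℕ → Ω → ℝ) : xiBeta ξ (-η) ζ = xiAlpha ξ η ζ := by
  funext n ω
  rw [xiAlpha, xiBeta, betaProc_neg hξv hηv]

end Swap

section Adapted

variable {mΩ : MeasurableSpace Ω} {F : Filtration ℕ mΩ} {ξ η : ℕ → Ω → ℝ}
  (hξm : ∀ n, 1 ≤ n → Measurable[F n] (ξ n)) (hηm : ∀ n, 1 ≤ n → Measurable[F n] (η n))
include hξm hηm

lemma measurable_Tproc (j : ℕ) : Measurable[F j] (Tproc ξ η j) := by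
  refine Finset.measurable_sum _ fun k hk => Measurable.ite ?_ measurable_const measurable_const
  obtain ⟨hk1, hkj⟩ := Finset.mem_Icc.1 hk
  exact F.mono hkj _ (measurableSet_eq_fun (hξm k hk1) (hηm k hk1))

lemma measurable_Sproc (j : ℕ) : Measurable[F j] (Sproc ξ η j) :=
  (measurable_from_top (f := fun t : ℕ => j - t)).comp (measurable_Tproc hξm hηm j)

lemma isStoppingTime_alphaProc {n : ℕ} (hn : 1 ≤ n) : IsStoppingTime F (alphaProc ξ η n) :=
  isStoppingTime_firstHit F (measurable_Tproc hξm hηm) (isCountingPath_Tproc ξ η) hn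

lemma isStoppingTime_betaProc {n : ℕ} (hn : 1 ≤ n) : IsStoppingTime F (betaProc ξ η n) :=
  isStoppingTime_firstHit F (measurable_Sproc hξm hηm) (isCountingPath_Sproc ξ η) hn

end Adapted

section Fibres

variable {m mΩ : MeasurableSpace Ω} {P : Measure Ω} {F : Filtration ℕ mΩ}
  {ξ η : ℕ → Ω → ℝ} (hξm : ∀ n, 1 ≤ n → Measurable[F n] (ξ n))
  (hηm : ∀ n, 1 ≤ n → Measurable[F n] (η n))
  {ζ : ℕ → Ω → ℝ} {N : ℕ} (hN : 1 ≤ N) {c : ℝ} {E : Set Ω} {σ : Ω → ℕ∞}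
include hξm hηm hN

lemma measure_inter_xiAlpha_inter_lt_alphaProc_eq_succ [IsFiniteMeasure P]
    (hξv : ∀ n ω, ξ n ω = 1 ∨ ξ n ω = -1)
    (hηv : ∀ n ω, η n ω = 1 ∨ η n ω = -1) (hξfair : ∀ j, IsFairCoin P (F j) (ξ (j + 1)))
    (hηfair : ∀ j, IsFairCoin P (F j) (η (j + 1))) (hc : c = 1 ∨ c = -1) {j : ℕ}
    (hEF : MeasurableSet[F j] (E ∩ {ω | σ ω ≤ j} ∩ {ω | Tproc ξ η j ω + 1 = N})) :
    P (E ∩ {ω | xiAlpha ξ η ζ N ω = c} ∩ {ω | σ ω < alphaProc ξ η N ω}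
        ∩ {ω | alphaProc ξ η N ω = (j + 1 : ℕ)})
      = 2⁻¹ * P (E ∩ {ω | σ ω < alphaProc ξ η N ω} ∩ {ω | alphaProc ξ η N ω = (j + 1 : ℕ)}) := by
  set G := E ∩ {ω | σ ω ≤ j} ∩ {ω | Tproc ξ η j ω + 1 = N}
  have hσα : ∀ ω, alphaProc ξ η N ω = (j + 1 : ℕ) →
      (σ ω < alphaProc ξ η N ω ↔ σ ω ≤ j) := fun ω h => by
    rw [h, Nat.cast_succ, ENat.lt_natCast_add_one_iff]
  have hfibre : E ∩ {ω | σ ω < alphaProc ξ η N ω} ∩ {ω | alphaProc ξ η N ω = (j + 1 : ℕ)}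
      = G ∩ {ω | ξ (j + 1) ω = η (j + 1) ω} := by
    ext ω
    simp only [G, Set.mem_inter_iff, Set.mem_ofPred_eq]
    constructor
    · rintro ⟨⟨hE, hlt⟩, hα⟩
      have := (alphaProc_eq_succ_iff ξ η hN j ω).1 hα
      exact ⟨⟨⟨hE, (hσα ω hα).1 hlt⟩, this.1⟩, this.2⟩
    · rintro ⟨⟨⟨hE, hle⟩, hT⟩, hQ⟩
      have hα := (alphaProc_eq_succ_iff ξ η hN j ω).2 ⟨hT, hQ⟩
      exact ⟨⟨hE, (hσα ω hα).2 hle⟩, hα⟩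
  have hfibre_c : E ∩ {ω | xiAlpha ξ η ζ N ω = c} ∩ {ω | σ ω < alphaProc ξ η N ω}
      ∩ {ω | alphaProc ξ η N ω = (j + 1 : ℕ)} = G ∩ {ω | ξ (j + 1) ω = η (j + 1) ω}
        ∩ {ω | ξ (j + 1) ω = c} := by
    rw [← hfibre]
    ext ω
    simp only [Set.mem_inter_iff, Set.mem_ofPred_eq]
    constructor
    · rintro ⟨⟨⟨hE, hxi⟩, hlt⟩, hα⟩
      exact ⟨⟨⟨hE, hlt⟩, hα⟩, (hitValue_of_eq_coe hα).symm.trans hxi⟩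
    · rintro ⟨⟨⟨hE, hlt⟩, hα⟩, hξc⟩
      exact ⟨⟨⟨hE, (hitValue_of_eq_coe hα).trans hξc⟩, hlt⟩, hα⟩
  rw [hfibre, hfibre_c]
  exact (hξfair j).measure_inter_agree (hηfair j) ((hξm _ (by omega)).mono (F.le _) le_rfl)
    ((hηm _ (by omega)).mono (F.le _) le_rfl) (hξv _) (hηv _) hEF hc

lemma measure_inter_xiAlpha_inter_lt_alphaProc_eq_top (hFm : ∀ j, F j ≤ m)
    (hind : Indep (MeasurableSpace.comap (ζ N) inferInstance) m P)
    (hζc : P {ω | ζ N ω = c} = 2⁻¹) (hσ : IsStoppingTime F σ) (hE : MeasurableSet[m] E) :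
    P (E ∩ {ω | xiAlpha ξ η ζ N ω = c} ∩ {ω | σ ω < alphaProc ξ η N ω}
        ∩ {ω | alphaProc ξ η N ω = ⊤})
      = 2⁻¹ * P (E ∩ {ω | σ ω < alphaProc ξ η N ω} ∩ {ω | alphaProc ξ η N ω = ⊤}) := by
  have hα := measurable_of_isStoppingTime hFm (isStoppingTime_alphaProc hξm hηm hN)
  have hH : MeasurableSet[m]
      (E ∩ {ω | σ ω < alphaProc ξ η N ω} ∩ {ω | alphaProc ξ η N ω = ⊤}) :=
    (hE.inter (measurableSet_lt_of_measurable (measurable_of_isStoppingTime hFm hσ) hα)).inter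
      (hα (measurableSet_singleton ⊤))
  have hfibre : E ∩ {ω | xiAlpha ξ η ζ N ω = c} ∩ {ω | σ ω < alphaProc ξ η N ω}
      ∩ {ω | alphaProc ξ η N ω = ⊤}
      = {ω | ζ N ω = c} ∩ (E ∩ {ω | σ ω < alphaProc ξ η N ω} ∩ {ω | alphaProc ξ η N ω = ⊤}) := by
    ext ω
    simp only [Set.mem_inter_iff, Set.mem_ofPred_eq]
    constructor
    · rintro ⟨⟨⟨hE, hxi⟩, hlt⟩, htop⟩
      exact ⟨(hitValue_of_eq_top htop).symm.trans hxi, ⟨hE, hlt⟩, htop⟩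
    · rintro ⟨hζ, ⟨hE, hlt⟩, htop⟩
      exact ⟨⟨⟨hE, (hitValue_of_eq_top htop).trans hζ⟩, hlt⟩, htop⟩
  rw [hfibre, (hind.indepSet_of_measurableSet (s := {ω | ζ N ω = c})
    ⟨{c}, measurableSet_singleton c, rfl⟩ hH).measure_inter_eq_mul, hζc]

theorem measure_inter_xiAlpha_inter_lt_alphaProc [IsFiniteMeasure P]
    (hξv : ∀ n ω, ξ n ω = 1 ∨ ξ n ω = -1) (hηv : ∀ n ω, η n ω = 1 ∨ η n ω = -1)
    (hξfair : ∀ j, IsFairCoin P (F j) (ξ (j + 1))) (hηfair : ∀ j, IsFairCoin P (F j) (η (j + 1)))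
    (hc : c = 1 ∨ c = -1) (hm : m ≤ mΩ) (hFm : ∀ j, F j ≤ m)
    (hζN : Measurable (ζ N)) (hind : Indep (MeasurableSpace.comap (ζ N) inferInstance) m P)
    (hζc : P {ω | ζ N ω = c} = 2⁻¹) (hσ : IsStoppingTime F σ) (hE : MeasurableSet[m] E)
    (hEF : ∀ j, MeasurableSet[F j] (E ∩ {ω | σ ω ≤ j} ∩ {ω | Tproc ξ η j ω + 1 = N})) :
    P (E ∩ {ω | xiAlpha ξ η ζ N ω = c} ∩ {ω | σ ω < alphaProc ξ η N ω})
      = 2⁻¹ * P (E ∩ {ω | σ ω < alphaProc ξ η N ω}) := by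
  have hα := measurable_of_isStoppingTime F.le (isStoppingTime_alphaProc hξm hηm hN)
  have hfibres : ∀ t, MeasurableSet {ω | alphaProc ξ η N ω = t} :=
    fun t => hα (measurableSet_singleton t)
  have hlt := measurableSet_lt_of_measurable (measurable_of_isStoppingTime F.le hσ) hα
  have hxi : MeasurableSet {ω | xiAlpha ξ η ζ N ω = c} :=
    measurableSet_hitValue_eq F (measurable_Tproc hξm hηm) (isCountingPath_Tproc ξ η) hξm ζ F.le
      hN hζN c
  rw [measure_eq_tsum_inter_fiber hfibres (((hm _ hE).inter hxi).inter hlt),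
    measure_eq_tsum_inter_fiber hfibres ((hm _ hE).inter hlt), ← ENNReal.tsum_mul_left]
  refine tsum_congr fun t => ?_
  cases t using ENat.recTopCoe with
  | top =>
    exact measure_inter_xiAlpha_inter_lt_alphaProc_eq_top hξm hηm hN hFm hind hζc hσ hE
  | coe j =>
    cases j with
    | zero =>
      have : {ω | alphaProc ξ η N ω = 0} = ∅ :=
        Set.eq_empty_of_forall_notMem fun ω h =>
          absurd (one_le_firstHit (Tproc ξ η · ω) N) (by rw [← alphaProc_eq_firstHit, h]; simp)
      simp [this]
    | succ j =>
      exact measure_inter_xiAlpha_inter_lt_alphaProc_eq_succ hξm hηm hN hξv hηv hξfair hηfair hc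
        (hEF j)

end Fibres

section PastEvents

variable {mΩ : MeasurableSpace Ω} {F : Filtration ℕ mΩ} {ξ η : ℕ → Ω → ℝ}
  (hξm : ∀ n, 1 ≤ n → Measurable[F n] (ξ n)) (hηm : ∀ n, 1 ≤ n → Measurable[F n] (η n))
  (ζ ψ : ℕ → Ω → ℝ) {ι κ : Type*} [Countable ι] [Countable κ]
include hξm hηm

lemma measurableSet_xiAlpha_xiBeta_inter_betaProc_le {N M : ℕ} {a : ι → ℕ} {b : κ → ℕ}
    (ha : ∀ i, 1 ≤ a i ∧ a i < N) (hb : ∀ i, 1 ≤ b i ∧ b i ≤ M) (hM : 1 ≤ M)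
    (x : ι → ℝ) (y : κ → ℝ) (j : ℕ) :
    MeasurableSet[F j] ({ω | ∀ i, xiAlpha ξ η ζ (a i) ω = x i}
      ∩ {ω | ∀ i, xiBeta ξ η ψ (b i) ω = y i}
      ∩ {ω | betaProc ξ η M ω ≤ j} ∩ {ω | Tproc ξ η j ω + 1 = N}) := by
  have hD : MeasurableSet[F j] ({ω | betaProc ξ η M ω ≤ j} ∩ {ω | Tproc ξ η j ω + 1 = N}) :=
    (isStoppingTime_betaProc hξm hηm hM j).inter
      (measurable_Tproc hξm hηm j (MeasurableSet.of_discrete (s := {n : ℕ | n + 1 = N})))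
  -- on `{β_M ≤ j} ∩ {T_j = N - 1}` all the hitting times `β_{b i}` and `α_{a i}` are `≤ j`
  have hB := measurableSet_setOf_forall_hitValue_eq_inter F (measurable_Sproc hξm hηm)
    (isCountingPath_Sproc ξ η) hξm ψ (fun i => (hb i).1) y hD fun ω hω i =>
      ((isCountingPath_Sproc ξ η ω).firstHit_mono (hb i).1 (hb i).2).trans hω.1
  have hA := measurableSet_setOf_forall_hitValue_eq_inter F (measurable_Tproc hξm hηm)
    (isCountingPath_Tproc ξ η) hξm ζ (fun i => (ha i).1) x hB fun ω hω i =>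
      ((isCountingPath_Tproc ξ η ω).firstHit_le_iff (ha i).1 j).2 <| by
        have : Tproc ξ η j ω + 1 = N := hω.2.2
        have := (ha i).2
        omega
  rw [xiAlpha_eq_hitValue, xiBeta_eq_hitValue, Set.inter_assoc, Set.inter_assoc]
  exact hA

end PastEvents

theorem measure_inter_betaProc_lt_alphaProc {mΩ : MeasurableSpace Ω} (P : Measure Ω)
    [IsFiniteMeasure P] (F : Filtration ℕ mΩ) {ξ η : ℕ → Ω → ℝ}
    (hξm : ∀ n, 1 ≤ n → Measurable[F n] (ξ n)) (hηm : ∀ n, 1 ≤ n → Measurable[F n] (η n))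
    (hξv : ∀ n ω, ξ n ω = 1 ∨ ξ n ω = -1) (hηv : ∀ n ω, η n ω = 1 ∨ η n ω = -1)
    (hξfair : ∀ j, IsFairCoin P (F j) (ξ (j + 1))) (hηfair : ∀ j, IsFairCoin P (F j) (η (j + 1)))
    {ζ ψ : ℕ → Ω → ℝ} (hζm : ∀ n, Measurable (ζ n)) (hψm : ∀ n, Measurable (ψ n))
    (hζd : ∀ n, P {ω | ζ n ω = 1} = 2⁻¹ ∧ P {ω | ζ n ω = -1} = 2⁻¹)
    (hindep : iIndep (fun i : ℕ ⊕ ℕ ⊕ Unit =>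
      Sum.elim (fun n => MeasurableSpace.comap (ζ n) inferInstance)
        (Sum.elim (fun n => MeasurableSpace.comap (ψ n) inferInstance)
          (fun _ => ⨆ n, (F n : MeasurableSpace Ω))) i) P)
    {k l : ℕ} (hk : k - 1 < k) (hl : l - 1 < l) {nn : Fin k → ℕ} {mm : Fin l → ℕ}
    (hn1 : ∀ i, 1 ≤ nn i) (hm1 : ∀ j, 1 ≤ mm j) (hnmono : StrictMono nn)
    (hmmono : StrictMono mm) (x : Fin k → ℝ) (y : Fin l → ℝ)
    (hx : x ⟨k - 1, hk⟩ = 1 ∨ x ⟨k - 1, hk⟩ = -1) :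
    P ({ω | ∀ i, xiAlpha ξ η ζ (nn i) ω = x i} ∩ {ω | ∀ j, xiBeta ξ η ψ (mm j) ω = y j}
        ∩ {ω | betaProc ξ η (mm ⟨l - 1, hl⟩) ω < alphaProc ξ η (nn ⟨k - 1, hk⟩) ω})
      = 2⁻¹ * P ({ω | ∀ i : Fin k, (i : ℕ) + 1 < k → xiAlpha ξ η ζ (nn i) ω = x i}
        ∩ {ω | ∀ j, xiBeta ξ η ψ (mm j) ω = y j}
        ∩ {ω | betaProc ξ η (mm ⟨l - 1, hl⟩) ω < alphaProc ξ η (nn ⟨k - 1, hk⟩) ω}) := by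
  set N := nn ⟨k - 1, hk⟩
  obtain ⟨m, hm, hFm, hζ, hψ, hind⟩ := exists_indep_comap_of_iIndep_sum_elim hζm hψm hindep N
  have ha : ∀ i : {i : Fin k // (i : ℕ) + 1 < k}, 1 ≤ nn i ∧ nn i < N := fun i =>
    ⟨hn1 i, hnmono (Fin.lt_def.2 (by have := i.2; simp only; omega))⟩
  have hb : ∀ j, 1 ≤ mm j ∧ mm j ≤ mm ⟨l - 1, hl⟩ := fun j =>
    ⟨hm1 j, hmmono.monotone (Fin.le_def.2 (by have := j.2; simp only; omega))⟩
  have hA' : {ω | ∀ i : Fin k, (i : ℕ) + 1 < k → xiAlpha ξ η ζ (nn i) ω = x i}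
      = {ω | ∀ i : {i : Fin k // (i : ℕ) + 1 < k}, xiAlpha ξ η ζ (nn i) ω = x i} := by
    ext ω
    simp [Subtype.forall]
  have hE : MeasurableSet[m]
      ({ω | ∀ i : {i : Fin k // (i : ℕ) + 1 < k}, xiAlpha ξ η ζ (nn i) ω = x i}
        ∩ {ω | ∀ j, xiBeta ξ η ψ (mm j) ω = y j}) :=
    (measurableSet_setOf_forall_hitValue_eq F (measurable_Tproc hξm hηm)
      (isCountingPath_Tproc ξ η) hξm ζ (fun i => (ha i).1) _ hFm fun i => hζ _ (ha i).2.ne).inter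
    (measurableSet_setOf_forall_hitValue_eq F (measurable_Sproc hξm hηm)
      (isCountingPath_Sproc ξ η) hξm ψ hm1 _ hFm fun j => hψ _)
  have hζc : P {ω | ζ N ω = x ⟨k - 1, hk⟩} = 2⁻¹ := by
    rcases hx with h | h <;> rw [h]
    exacts [(hζd N).1, (hζd N).2]
  rw [setOf_forall_fin_eq_inter_last hk, hA', Set.inter_right_comm _ {ω | _ = x ⟨k - 1, hk⟩}]
  exact measure_inter_xiAlpha_inter_lt_alphaProc hξm hηm (hn1 _) hξv hηv hξfair hηfair hx
    hm hFm (hζm N) hind hζc (isStoppingTime_betaProc hξm hηm (hm1 _))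
    hE (measurableSet_xiAlpha_xiBeta_inter_betaProc_le hξm hηm ζ ψ ha hb (hm1 _) _ y)

theorem stmt_6
    {Ω : Type*} [mΩ : MeasurableSpace Ω] (P : Measure Ω) [IsProbabilityMeasure P]
    (F : MeasureTheory.Filtration ℕ mΩ)
    (ξ η : ℕ → Ω → ℝ)
    (hξm : ∀ n, 1 ≤ n → Measurable[F n] (ξ n))
    (hηm : ∀ n, 1 ≤ n → Measurable[F n] (η n))
    (hξv : ∀ n ω, ξ n ω = 1 ∨ ξ n ω = -1)
    (hηv : ∀ n ω, η n ω = 1 ∨ η n ω = -1)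
    (hhalf : ∀ n, 1 ≤ n →
      (P[({ω | ξ n ω = 1}).indicator (fun _ => (1 : ℝ)) | F (n - 1)] =ᵐ[P] fun _ => 1 / 2) ∧
      (P[({ω | ξ n ω = -1}).indicator (fun _ => (1 : ℝ)) | F (n - 1)] =ᵐ[P] fun _ => 1 / 2) ∧
      (P[({ω | η n ω = 1}).indicator (fun _ => (1 : ℝ)) | F (n - 1)] =ᵐ[P] fun _ => 1 / 2) ∧
      (P[({ω | η n ω = -1}).indicator (fun _ => (1 : ℝ)) | F (n - 1)] =ᵐ[P] fun _ => 1 / 2))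
    (ζ ψ : ℕ → Ω → ℝ)
    (hζm : ∀ n, Measurable (ζ n)) (hψm : ∀ n, Measurable (ψ n))
    (hζd : ∀ n, P {ω | ζ n ω = 1} = 2⁻¹ ∧ P {ω | ζ n ω = -1} = 2⁻¹)
    (hψd : ∀ n, P {ω | ψ n ω = 1} = 2⁻¹ ∧ P {ω | ψ n ω = -1} = 2⁻¹)
    (hindep : iIndep (fun i : ℕ ⊕ ℕ ⊕ Unit =>
      Sum.elim (fun n => MeasurableSpace.comap (ζ n) inferInstance)
        (Sum.elim (fun n => MeasurableSpace.comap (ψ n) inferInstance)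
          (fun _ => ⨆ n, (F n : MeasurableSpace Ω))) i) P)
    (k l : ℕ) (hk : 1 ≤ k) (hl : 1 ≤ l)
    (nn : Fin k → ℕ) (mm : Fin l → ℕ)
    (hn1 : ∀ i, 1 ≤ nn i) (hm1 : ∀ j, 1 ≤ mm j)
    (hnmono : StrictMono nn) (hmmono : StrictMono mm)
    (x : Fin k → ℝ) (y : Fin l → ℝ)
    (hx : ∀ i, x i = 1 ∨ x i = -1) (hy : ∀ j, y j = 1 ∨ y j = -1) :
    P ({ω | ∀ i, xiAlpha ξ η ζ (nn i) ω = x i} ∩ {ω | ∀ j, xiBeta ξ η ψ (mm j) ω = y j})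
      = 2⁻¹ * P ({ω | ∀ i : Fin k, (i : ℕ) + 1 < k → xiAlpha ξ η ζ (nn i) ω = x i}
            ∩ {ω | ∀ j, xiBeta ξ η ψ (mm j) ω = y j}
            ∩ {ω | betaProc ξ η (mm ⟨l - 1, by omega⟩) ω
                < alphaProc ξ η (nn ⟨k - 1, by omega⟩) ω})
        + 2⁻¹ * P ({ω | ∀ i, xiAlpha ξ η ζ (nn i) ω = x i}
            ∩ {ω | ∀ j : Fin l, (j : ℕ) + 1 < l → xiBeta ξ η ψ (mm j) ω = y j}
            ∩ {ω | alphaProc ξ η (nn ⟨k - 1, by omega⟩) ω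
                < betaProc ξ η (mm ⟨l - 1, by omega⟩) ω}) := by
  have hξfair : ∀ j, IsFairCoin P (F j) (ξ (j + 1)) := fun j =>
    isFairCoin_of_condExp (F.le j) ((hξm _ j.succ_pos).mono (F.le _) le_rfl)
      (hhalf _ j.succ_pos).1 (hhalf _ j.succ_pos).2.1
  have hηfair : ∀ j, IsFairCoin P (F j) (η (j + 1)) := fun j =>
    isFairCoin_of_condExp (F.le j) ((hηm _ j.succ_pos).mono (F.le _) le_rfl)
      (hhalf _ j.succ_pos).2.2.1 (hhalf _ j.succ_pos).2.2.2
  have h_lt := measure_inter_betaProc_lt_alphaProc P F hξm hηm hξv hηv hξfair hηfair hζm hψm hζd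
    hindep (by omega) (by omega) hn1 hm1 hnmono hmmono x y (hx _)
  have h_gt := measure_inter_betaProc_lt_alphaProc P F (η := -η) hξm (fun n hn => (hηm n hn).neg)
    hξv (fun n ω => by rcases hηv n ω with h | h <;> simp [h]) hξfair (fun j => (hηfair j).neg)
    hψm hζm hψd (iIndep_sum_elim_swap hindep) (by omega) (by omega) hm1 hn1 hmmono hnmono y x
    (hy _)
  rw [xiAlpha_neg hξv hηv, xiBeta_neg hξv hηv, alphaProc_neg hξv hηv, betaProc_neg hξv hηv,
    Set.inter_comm {ω | ∀ j, xiBeta ξ η ψ (mm j) ω = y j},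
    Set.inter_comm {ω | ∀ j : Fin l, (j : ℕ) + 1 < l → xiBeta ξ η ψ (mm j) ω = y j}] at h_gt
  have hα := measurable_of_isStoppingTime F.le
    (isStoppingTime_alphaProc hξm hηm (hn1 ⟨k - 1, by omega⟩))
  have hβ := measurable_of_isStoppingTime F.le
    (isStoppingTime_betaProc hξm hηm (hm1 ⟨l - 1, by omega⟩))
  rw [measure_eq_inter_lt_add_inter_lt P (fun ω => (alphaProc_ne_betaProc ξ η (hn1 _) (hm1 _) ω).symm)
    (measurableSet_lt_of_measurable hβ hα), h_lt, h_gt]
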